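/- arXiv:1108.2554 — 2 statements merged into one kernel-verified Lean document; each statement's English description precedes it below -/
import Mathlib

section
/- A partial type p(x) has dp-rank ≤ n if and only if every formula φ(x;y) has local dp-rank ≤ n with respect to p. (Proposition 2.3) -/
open FirstOrder FirstOrder.Language

namespace VCPaper

variable {L : Language}

/-- `a` realizes the partial type `p(x)`. -/
def RealizesType {M : Type*} [L.Structure M] {α : Type*}
    (p : Set (L.Formula α)) (a : α → M) : Prop :=
  ∀ ψ ∈ p, ψ.Realize a

/-- The family `b` (of `β`-tuples), indexed by a linear order `I`, is an
indiscernible sequence: any two strictly increasing tuples of indices of the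
same length satisfy the same formulas. -/
def IsIndiscernible (L : Language) {M : Type*} [L.Structure M] {β : Type*} {I : Type*}
    [LinearOrder I] (b : I → β → M) : Prop :=
  ∀ (n : ℕ) (ψ : L.Formula (Fin n × β)) (i j : Fin n → I), StrictMono i → StrictMono j →
    (ψ.Realize (fun v => b (i v.1) v.2) ↔ ψ.Realize (fun v => b (j v.1) v.2))

/-- `S_φ(B) ∩ [p]` for the finite sequence `b = ⟨b_i : i < N⟩`: the set of
`φ`-types over the terms of the sequence consistent with `p` (in the monster
model, consistent = realized). -/
def SeqPhiTypes {M : Type*} [L.Structure M] {α β : Type*} (φ : L.Formula (α ⊕ β))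
    (p : Set (L.Formula α)) {N : ℕ} (b : Fin N → β → M) : Set (Fin N → Bool) :=
  { q | ∃ a : α → M, RealizesType p a ∧ ∀ i, (q i = true ↔ φ.Realize (Sum.elim a (b i))) }

/-- `φ(x;y)` has VC_ind-density `≤ ℓ` with respect to `p`. -/
def VCIndDensityLE (M : Type*) [L.Structure M] {α β : Type*} (φ : L.Formula (α ⊕ β))
    (p : Set (L.Formula α)) (ℓ : ℝ) : Prop :=
  ∃ K : ℝ, ∀ N : ℕ, 0 < N → ∀ b : Fin N → β → M, IsIndiscernible L b →
    ((SeqPhiTypes φ p b).ncard : ℝ) ≤ K * (N : ℝ) ^ ℓ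

/-- `i ∼_C j` for `i, j ∈ ℚ` and `C ⊆ ℝ` (`ℝ` being the completion of `ℚ`). -/
def SimRel (C : Set ℝ) (i j : ℚ) : Prop :=
  ∀ c ∈ C, ((c ≤ (i : ℝ)) ↔ (c ≤ (j : ℝ))) ∧ (((i : ℝ) ≤ c) ↔ ((j : ℝ) ≤ c))

/-- `φ(x;y)` has local dp-rank `≤ n` with respect to `p`. -/
def LocalDpRankLE (M : Type*) [L.Structure M] {α β : Type*} (φ : L.Formula (α ⊕ β))
    (p : Set (L.Formula α)) (n : ℕ) : Prop :=
  ∀ a : α → M, RealizesType p a → ∀ b : ℚ → β → M, IsIndiscernible L b →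
    ∃ C : Finset ℝ, C.card ≤ n ∧ ∀ i j : ℚ, SimRel (↑C) i j →
      (φ.Realize (Sum.elim a (b i)) ↔ φ.Realize (Sum.elim a (b j)))

/-- The partial type `p(x)` has dp-rank `≤ n`. -/
def DpRankLE (M : Type*) [L.Structure M] {α : Type*}
    (p : Set (L.Formula α)) (n : ℕ) : Prop :=
  ∀ a : α → M, RealizesType p a → ∀ (γ : Type) (b : ℚ → γ → M), IsIndiscernible L b →
    ∃ C : Finset ℝ, C.card ≤ n ∧ ∀ i j : ℚ, SimRel (↑C) i j →
      ∀ ψ : L.Formula (γ ⊕ α),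
        (ψ.Realize (Sum.elim (b i) a) ↔ ψ.Realize (Sum.elim (b j) a))

/-- `φ(x;y)` has UDTFS_ind-rank `≤ n` with respect to `p`. -/
def UDTFSIndRankLE (M : Type*) [L.Structure M] {α β : Type*} (φ : L.Formula (α ⊕ β))
    (p : Set (L.Formula α)) (n : ℕ) : Prop :=
  ∃ (ℓ k R : ℕ)
    (ψ : Fin R → L.Formula (β ⊕ ((Fin n × Fin (ℓ + 1)) ⊕ Fin k) × β)),
    ∀ N : ℕ, 0 < N → ∀ b : Fin N → β → M, IsIndiscernible L b →
      ∃ jj : Fin k → Fin N, ∀ q ∈ SeqPhiTypes φ p b,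
        ∃ (r : Fin R) (ii : Fin n → ℕ) (g : (Fin n × Fin (ℓ + 1)) ⊕ Fin k → Fin N),
          (∀ m, ii m < N) ∧
          (∀ (m : Fin n) (t : Fin (ℓ + 1)), ii m + (t : ℕ) < N →
            ((g (Sum.inl (m, t)) : ℕ) = ii m + (t : ℕ))) ∧
          (∀ s, g (Sum.inr s) = jj s) ∧
          ∀ i : Fin N,
            ((ψ r).Realize (Sum.elim (b i) (fun v => b (g v.1) v.2)) ↔ q i = true)

/-- `S_φ(B) ∩ [p]` for an arbitrary set `B` of `β`-tuples. -/
def SetPhiTypes (M : Type*) [L.Structure M] {α β : Type*} (φ : L.Formula (α ⊕ β))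
    (p : Set (L.Formula α)) (B : Set (β → M)) : Set ((β → M) → Bool) :=
  { q | (∀ c ∉ B, q c = false) ∧
        ∃ a : α → M, RealizesType p a ∧ ∀ c ∈ B, (q c = true ↔ φ.Realize (Sum.elim a c)) }

/-- `φ(x;y)` has VC-density `≤ ℓ` with respect to `p`. -/
def VCDensityLE (M : Type*) [L.Structure M] {α β : Type*} (φ : L.Formula (α ⊕ β))
    (p : Set (L.Formula α)) (ℓ : ℝ) : Prop :=
  ∃ K : ℝ, ∀ B : Set (β → M), B.Finite → B.Nonempty →
    ((SetPhiTypes M φ p B).ncard : ℝ) ≤ K * (B.ncard : ℝ) ^ ℓ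

/-- `φ(x;y)` has UDTFS-rank `≤ n` with respect to `p`. -/
def UDTFSRankLE (M : Type*) [L.Structure M] {α β : Type*} (φ : L.Formula (α ⊕ β))
    (p : Set (L.Formula α)) (n : ℕ) : Prop :=
  ∃ (R : ℕ) (ψ : Fin R → L.Formula (β ⊕ Fin n × β)),
    ∀ B : Set (β → M), B.Finite → B.Nonempty →
      ∀ q ∈ SetPhiTypes M φ p B,
        ∃ (r : Fin R) (f : Fin n → β → M), (∀ m, f m ∈ B) ∧
          ∀ c ∈ B, ((ψ r).Realize (Sum.elim c (fun v => f v.1 v.2)) ↔ q c = true)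

/-! The trace `i ↦ φ(a; b_i)` of a formula along the sequence is constant on the `∼_C`-classes of
a finite `C` exactly when `C` contains its cuts, the points near which it is not locally constant.
So it suffices to bound the number of cuts of all formulas together. Given formulas `φ t` with
cuts `c₀ < ⋯ < c_{m-1}`, squeeze a copy of the sequence into a small neighbourhood of each `c t`,
the indices below and above `t` going below and above `c t`, and take the exclusive disjunction
of the `φ t` along these copies. Along the resulting indiscernible sequence this single formula
has a cut at every `t`, so local dp-rank `≤ n` forces `m ≤ n`. -/

section Sign

variable {k : Type*} [Field k] [LinearOrder k] [IsStrictOrderedRing k]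

lemma sign_add_of_abs_lt {z e : k} (h : |e| < |z|) : SignType.sign (z + e) = SignType.sign z := by
  rcases lt_trichotomy z 0 with hz | rfl | hz
  · rw [abs_of_neg hz] at h
    rw [sign_neg hz, sign_neg (by linarith [le_abs_self e])]
  · exact absurd h (by simp)
  · rw [abs_of_pos hz] at h
    rw [sign_pos hz, sign_pos (by linarith [neg_abs_le e])]

lemma le_iff_le_of_sign_sub_eq {x y d : k} (h : SignType.sign (x - d) = SignType.sign (y - d)) :
    (d ≤ x ↔ d ≤ y) ∧ (x ≤ d ↔ y ≤ d) := by
  constructor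
  · rw [← sub_nonneg, ← sign_nonneg_iff, h, sign_nonneg_iff, sub_nonneg]
  · rw [← sub_nonpos, ← sign_nonpos_iff, h, sign_nonpos_iff, sub_nonpos]

lemma strictMono_div_one_add_abs : StrictMono fun x : k => x / (1 + |x|) := by
  refine strictMono_of_odd_strictMonoOn_nonneg (fun x => by simp [neg_div]) ?_
  rintro x (hx : 0 ≤ x) y (hy : 0 ≤ y) hxy
  simp only [abs_of_nonneg hx, abs_of_nonneg hy]
  rw [div_lt_div_iff₀ (by linarith) (by linarith)]
  linarith

lemma abs_div_one_add_abs_lt_one (x : k) : |x / (1 + |x|)| < 1 := by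
  have h : 0 < 1 + |x| := by positivity
  rw [abs_div, abs_of_pos h, div_lt_one h]
  linarith

lemma one_le_abs_natCast_sub {a b : ℕ} (h : a ≠ b) : (1 : k) ≤ |(a : k) - b| := by
  rcases h.lt_or_gt with h | h
  · have : (a : k) + 1 ≤ b := by exact_mod_cast h
    exact le_abs.mpr (Or.inr (by linarith))
  · have : (b : k) + 1 ≤ a := by exact_mod_cast h
    exact le_abs.mpr (Or.inl (by linarith))

lemma sign_coe_signType (σ : SignType) : SignType.sign (σ : k) = σ := by
  cases σ <;> simp

lemma coe_signType_ne_zero {σ : SignType} (h : σ ≠ 0) : (σ : k) ≠ 0 := by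
  cases σ <;> simp_all

end Sign

lemma exists_pos_forall_le {ι : Type*} [Finite ι] (f : ι → ℝ) (hf : ∀ i, 0 < f i) :
    ∃ ε > 0, ∀ i, ε ≤ f i := by
  cases isEmpty_or_nonempty ι
  · exact ⟨1, one_pos, isEmptyElim⟩
  · obtain ⟨i₀, hi₀⟩ := Finite.exists_min f
    exact ⟨f i₀, hf i₀, hi₀⟩

lemma exists_finset_superset_of_forall_card_le {α : Type*} {U : Set α} {n : ℕ}
    (h : ∀ s : Finset α, ↑s ⊆ U → s.card ≤ n) : ∃ C : Finset α, C.card ≤ n ∧ U ⊆ C := by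
  have hU : U.Finite := by
    by_contra hinf
    obtain ⟨s, hsU, hs⟩ := Set.Infinite.exists_subset_card_eq hinf (n + 1)
    have := h s hsU
    omega
  exact ⟨hU.toFinset, h _ (by simp), by simp⟩

section Traces

lemma simRel_of_sign_eq {C : Set ℝ} {i j : ℚ}
    (h : ∀ c ∈ C, SignType.sign ((i : ℝ) - c) = SignType.sign ((j : ℝ) - c)) : SimRel C i j :=
  fun c hc => le_iff_le_of_sign_sub_eq (h c hc)

lemma SimRel.symm {C : Set ℝ} {i j : ℚ} (h : SimRel C i j) : SimRel C j i :=
  fun c hc => ⟨(h c hc).1.symm, (h c hc).2.symm⟩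

lemma exists_simRel_of_near (D : Finset ℝ) (c : ℝ) :
    ∃ ε > 0, ∀ x y : ℚ, |(x : ℝ) - c| < ε → |(y : ℝ) - c| < ε →
      (c ∈ D → SignType.sign ((x : ℝ) - c) = SignType.sign ((y : ℝ) - c)) → SimRel D x y := by
  obtain ⟨ε, hε, hεD⟩ := exists_pos_forall_le (fun d : {d : D // (d : ℝ) ≠ c} => |c - d|)
    fun d => abs_pos.mpr (sub_ne_zero.mpr d.2.symm)
  refine ⟨ε, hε, fun x y hx hy hxy => simRel_of_sign_eq fun d hd => ?_⟩
  by_cases hdc : d = c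
  · subst hdc
    exact hxy hd
  -- far from `d`, both `x` and `y` lie on the same side of `d` as `c`
  have hfar : ε ≤ |c - d| := hεD ⟨⟨d, hd⟩, hdc⟩
  rw [show (x : ℝ) - d = (c - d) + (x - c) by ring, show (y : ℝ) - d = (c - d) + (y - c) by ring,
    sign_add_of_abs_lt (by linarith), sign_add_of_abs_lt (by linarith)]

def Captures (C : Set ℝ) (F : ℚ → Prop) : Prop :=
  ∀ i j : ℚ, SimRel C i j → (F i ↔ F j)

def cuts (F : ℚ → Prop) : Set ℝ :=
  {c | ∀ ε > 0, ∃ i j : ℚ, |(i : ℝ) - c| < ε ∧ |(j : ℝ) - c| < ε ∧ ¬(F i ↔ F j)}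

variable {F : ℚ → Prop}

lemma Captures.mono {C C' : Set ℝ} (h : C ⊆ C') (hC : Captures C F) : Captures C' F :=
  fun i j hij => hC i j fun c hc => hij c (h hc)

lemma Captures.cuts_subset {D : Finset ℝ} (hD : Captures D F) : cuts F ⊆ D := by
  intro c hc
  by_contra hcD
  obtain ⟨ε, hε, hnear⟩ := exists_simRel_of_near D c
  obtain ⟨i, j, hi, hj, hF⟩ := hc ε hε
  exact hF (hD i j (hnear i j hi hj (absurd · hcD)))

lemma captures_cuts (F : ℚ → Prop) : Captures (cuts F) F := by
  intro i j hij
  wlog hlt : i < j generalizing i j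
  · rcases (not_lt.mp hlt).eq_or_lt with rfl | hji
    · rfl
    · exact (this j i hij.symm hji).symm
  by_contra hF
  set S : Set ℝ := {x | ∃ q : ℚ, (q : ℝ) = x ∧ i ≤ q ∧ ¬(F q ↔ F i)}
  have hjS : (j : ℝ) ∈ S := ⟨j, rfl, hlt.le, fun h => hF h.symm⟩
  have hS : BddBelow S := ⟨i, by rintro _ ⟨q, rfl, hq, -⟩; exact_mod_cast hq⟩
  have hic : (i : ℝ) ≤ sInf S :=
    le_csInf ⟨_, hjS⟩ (by rintro _ ⟨q, rfl, hq, -⟩; exact_mod_cast hq)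
  have hcj : sInf S ≤ j := csInf_le hS hjS
  -- the first point after `i` at which `F` changes is a cut lying in `[i, j]`
  have hcut : sInf S ∈ cuts F := by
    intro ε hε
    obtain ⟨_, ⟨q, rfl, hiq, hFq⟩, hqε⟩ :=
      exists_lt_of_csInf_lt ⟨_, hjS⟩ (lt_add_of_pos_right (sInf S) hε)
    have hcq : sInf S ≤ q := csInf_le hS ⟨q, rfl, hiq, hFq⟩
    by_cases hiε : sInf S - ε < i
    · exact ⟨q, i, abs_sub_lt_iff.mpr ⟨by linarith, by linarith⟩,
        abs_sub_lt_iff.mpr ⟨by linarith, by linarith⟩, hFq⟩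
    · obtain ⟨q', hq'ε, hq'c⟩ := exists_rat_btwn (sub_lt_self (sInf S) hε)
      have hFq' : F q' ↔ F i := by
        by_contra h
        have := csInf_le hS ⟨q', rfl, by exact_mod_cast (by linarith : (i : ℝ) ≤ q'), h⟩
        linarith
      exact ⟨q, q', abs_sub_lt_iff.mpr ⟨by linarith, by linarith⟩,
        abs_sub_lt_iff.mpr ⟨by linarith, by linarith⟩, fun h => hFq (h.trans hFq')⟩
  obtain ⟨hle, hge⟩ := hij _ hcut
  have : (j : ℝ) ≤ i := by linarith [hle.mpr hcj, hge.mp hic]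
  exact (not_le.mpr hlt) (by exact_mod_cast this)

def SignDeterminedNear (F : ℚ → Prop) (c ε : ℝ) : Prop :=
  ∀ x y : ℚ, |(x : ℝ) - c| < ε → |(y : ℝ) - c| < ε →
    SignType.sign ((x : ℝ) - c) = SignType.sign ((y : ℝ) - c) → (F x ↔ F y)

lemma Captures.exists_signDeterminedNear {D : Finset ℝ} (hD : Captures D F) (c : ℝ) :
    ∃ ε > 0, SignDeterminedNear F c ε := by
  obtain ⟨ε, hε, hnear⟩ := exists_simRel_of_near D c
  exact ⟨ε, hε, fun x y hx hy hxy => hD x y (hnear x y hx hy fun _ => hxy)⟩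

structure IsSqueeze (c ε : ℝ) (ι : ℚ → ℚ) : Prop where
  strictMono : StrictMono ι
  abs_sub_lt : ∀ x, |(ι x : ℝ) - c| < ε
  sign_sub : ∀ x ≠ 0, SignType.sign ((ι x : ℝ) - c) = SignType.sign x
  map_zero : ∀ q : ℚ, (q : ℝ) = c → ι 0 = q

lemma exists_rat_le_le_near (c : ℝ) {ε : ℝ} (hε : 0 < ε) :
    ∃ l r : ℚ, c - ε < l ∧ (l : ℝ) ≤ c ∧ c ≤ r ∧ (r : ℝ) < c + ε ∧
      ∀ q : ℚ, (q : ℝ) = c → r = q := by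
  by_cases hc : ∃ q : ℚ, (q : ℝ) = c
  · obtain ⟨q, rfl⟩ := hc
    exact ⟨q, q, by linarith, le_rfl, le_rfl, by linarith, fun _ h => by exact_mod_cast h.symm⟩
  · obtain ⟨l, hl, hlc⟩ := exists_rat_btwn (show c - ε < c by linarith)
    obtain ⟨r, hcr, hr⟩ := exists_rat_btwn (show c < c + ε by linarith)
    exact ⟨l, r, hl, hlc.le, hcr.le, hr, fun q h => absurd ⟨q, h⟩ hc⟩

lemma exists_isSqueeze (c : ℝ) {ε : ℝ} (hε : 0 < ε) : ∃ ι, IsSqueeze c ε ι := by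
  obtain ⟨l, r, hl, hlc, hcr, hr, hrq⟩ := exists_rat_le_le_near c (half_pos hε)
  obtain ⟨δ, hδ, hδε⟩ := exists_rat_btwn (half_pos hε)
  have hδ' : (0 : ℚ) < δ := by exact_mod_cast hδ
  set σ : ℚ → ℚ := fun x => x / (1 + |x|)
  have hσ : StrictMono σ := strictMono_div_one_add_abs
  have hσ0 : σ 0 = 0 := by simp [σ]
  have hσneg : ∀ x < 0, σ x < 0 := fun x hx => hσ0 ▸ hσ hx
  have hσpos : ∀ x, 0 < x → 0 < σ x := fun x hx => hσ0 ▸ hσ hx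
  have hδσ : ∀ x, |(δ : ℝ) * σ x| < ε / 2 := fun x => by
    have : |((σ x : ℚ) : ℝ)| < 1 := by exact_mod_cast abs_div_one_add_abs_lt_one x
    rw [abs_mul, abs_of_pos hδ]
    nlinarith [abs_nonneg ((σ x : ℚ) : ℝ)]
  refine ⟨fun x => (if x < 0 then l else r) + δ * σ x, ⟨?_, ?_, ?_, ?_⟩⟩
  · intro x y hxy
    have hδσ : δ * σ x < δ * σ y := mul_lt_mul_of_pos_left (hσ hxy) hδ'
    have hlr : l ≤ r := by exact_mod_cast hlc.trans hcr
    dsimp only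
    split_ifs with hx hy hy
    · linarith
    · nlinarith [hσneg x hx, hσ.monotone (not_lt.mp hy), hσ0]
    · exact absurd (hxy.trans hy) hx
    · linarith
  · intro x
    have := abs_lt.mp (hδσ x)
    split_ifs <;> push_cast <;> exact abs_sub_lt_iff.mpr ⟨by linarith, by linarith⟩
  · intro x hx
    rcases hx.lt_or_gt with hx | hx
    · have : (δ : ℝ) * σ x < 0 := mul_neg_of_pos_of_neg hδ (by exact_mod_cast hσneg x hx)
      rw [sign_neg hx, if_pos hx, sign_neg (by push_cast; linarith)]
    · have : 0 < (δ : ℝ) * σ x := mul_pos hδ (by exact_mod_cast hσpos x hx)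
      rw [sign_pos hx, if_neg hx.not_gt, sign_pos (by push_cast; linarith)]
  · intro q hq
    simp [hσ0, hrq q hq]

lemma IsSqueeze.lt {c c' r : ℝ} {ι ι' : ℚ → ℚ} (hι : IsSqueeze c r ι) (hι' : IsSqueeze c' r ι')
    (hcc' : c + r ≤ c' - r) (x y : ℚ) : ι x < ι' y := by
  have h := abs_lt.mp (hι.abs_sub_lt x)
  have h' := abs_lt.mp (hι'.abs_sub_lt y)
  exact_mod_cast (by linarith : (ι x : ℝ) < ι' y)

lemma exists_separating_radius_of_strictMono {m : ℕ} {c : Fin m → ℝ} (hc : StrictMono c)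
    (ε : Fin m → ℝ) (hε : ∀ t, 0 < ε t) :
    ∃ r > 0, (∀ t, r ≤ ε t) ∧ ∀ t t', t < t' → c t + r ≤ c t' - r := by
  obtain ⟨r₁, hr₁, hr₁ε⟩ := exists_pos_forall_le ε hε
  obtain ⟨r₂, hr₂, hr₂c⟩ := exists_pos_forall_le
    (fun p : {p : Fin m × Fin m // p.1 < p.2} => (c p.1.2 - c p.1.1) / 2)
    fun p => by linarith [hc p.2]
  refine ⟨min r₁ r₂, lt_min hr₁ hr₂, fun t => (min_le_left _ _).trans (hr₁ε t),
    fun t t' htt' => ?_⟩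
  linarith [min_le_right r₁ r₂, hr₂c ⟨(t, t'), htt'⟩]

namespace SignDeterminedNear

variable {c ε : ℝ} {ι : ℚ → ℚ}

lemma mono {ε' : ℝ} (hF : SignDeterminedNear F c ε) (h : ε' ≤ ε) : SignDeterminedNear F c ε' :=
  fun x y hx hy => hF x y (hx.trans_le h) (hy.trans_le h)

lemma comp_isSqueeze_iff (hF : SignDeterminedNear F c ε) (hι : IsSqueeze c ε ι) (x : ℚ) :
    F (ι x) ↔ F (ι (SignType.sign x)) := by
  rcases eq_or_ne x 0 with rfl | hx
  · simp
  · refine hF _ _ (hι.abs_sub_lt x) (hι.abs_sub_lt _) ?_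
    rw [hι.sign_sub x hx, hι.sign_sub _ (coe_signType_ne_zero (sign_ne_zero.mpr hx)),
      sign_coe_signType]

lemma exists_not_iff_of_mem_cuts (hF : SignDeterminedNear F c ε) (hι : IsSqueeze c ε ι)
    (hc : c ∈ cuts F) : ∃ σ τ : SignType, ¬(F (ι σ) ↔ F (ι τ)) := by
  have hrep : ∀ z : ℚ, |(z : ℝ) - c| < ε → ∃ σ : SignType, F z ↔ F (ι σ) := by
    intro z hz
    by_cases hzc : (z : ℝ) = c
    · exact ⟨0, by simp [hι.map_zero z hzc]⟩
    · refine ⟨SignType.sign ((z : ℝ) - c), hF _ _ hz (hι.abs_sub_lt _) ?_⟩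
      have hσ : SignType.sign ((z : ℝ) - c) ≠ 0 := sign_ne_zero.mpr (sub_ne_zero.mpr hzc)
      rw [hι.sign_sub _ (coe_signType_ne_zero hσ), sign_coe_signType]
  obtain ⟨x, y, hx, hy, hxy⟩ := hc ε ((abs_nonneg _).trans_lt (hι.abs_sub_lt 0))
  obtain ⟨σ, hσ⟩ := hrep x hx
  obtain ⟨τ, hτ⟩ := hrep y hy
  exact ⟨σ, τ, fun h => hxy (hσ.trans (h.trans hτ.symm))⟩

end SignDeterminedNear

end Traces

section Xor

def xorFin : {m : ℕ} → (Fin m → Prop) → Prop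
  | 0, _ => False
  | _ + 1, P => ¬(P 0 ↔ xorFin (P ∘ Fin.succ))

lemma not_xorFin_iff_of_forall_ne : ∀ {m : ℕ} {P Q : Fin m → Prop} (t : Fin m),
    (∀ s ≠ t, P s ↔ Q s) → ¬(P t ↔ Q t) → ¬(xorFin P ↔ xorFin Q)
  | 0, _, _, t, _, _ => t.elim0
  | m + 1, P, Q, t, h, ht => by
    induction t using Fin.cases with
    | zero =>
      have htail : P ∘ Fin.succ = Q ∘ Fin.succ :=
        funext fun s => propext (h s.succ (Fin.succ_ne_zero s))
      simp only [xorFin, htail]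
      tauto
    | succ t =>
      have htail := not_xorFin_iff_of_forall_ne (P := P ∘ Fin.succ) (Q := Q ∘ Fin.succ) t
        (fun s hs => h s.succ (Fin.succ_injective _ |>.ne hs)) ht
      have h0 := h 0 (Fin.succ_ne_zero t).symm
      simp only [xorFin]
      tauto

def xorFormula {γ : Type*} : {m : ℕ} → (Fin m → L.Formula γ) → L.Formula γ
  | 0, _ => ⊥
  | _ + 1, φ => ∼((φ 0).iff (xorFormula (φ ∘ Fin.succ)))

lemma realize_xorFormula {M : Type*} [L.Structure M] {γ : Type*} :
    ∀ {m : ℕ} (φ : Fin m → L.Formula γ) (v : γ → M),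
      (xorFormula φ).Realize v ↔ xorFin fun t => (φ t).Realize v
  | 0, _, _ => by simp [xorFormula, xorFin]
  | m + 1, φ, v => by
    rw [xorFormula, Formula.realize_not, Formula.realize_iff, realize_xorFormula]
    rfl

/-- Near `t`, only the `t`-th term of the exclusive disjunction can change. -/
lemma natCast_mem_cuts_xorFin {m : ℕ} (g : Fin m → SignType → Prop) {t : Fin m}
    {σ τ : SignType} (h : ¬(g t σ ↔ g t τ)) :
    ((t : ℕ) : ℝ) ∈ cuts fun i : ℚ => xorFin fun s => g s (SignType.sign (i - (s : ℕ))) := by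
  intro ε hε
  obtain ⟨δ, hδ, hδε⟩ := exists_rat_btwn (lt_min hε one_pos)
  have hδ' : (0 : ℚ) < δ := by exact_mod_cast hδ
  have hδ1 : δ < 1 := by exact_mod_cast hδε.trans_le (min_le_right ε 1)
  have hδρ : ∀ ρ : SignType, |δ * ρ| ≤ δ := fun ρ => by
    rw [abs_mul, abs_of_pos hδ']
    exact mul_le_of_le_one_right hδ'.le (by cases ρ <;> simp)
  have hnear : ∀ ρ : SignType, |(((t : ℕ) + δ * ρ : ℚ) : ℝ) - (t : ℕ)| < ε := fun ρ => by
    have hle : ((|δ * ρ| : ℚ) : ℝ) ≤ δ := by exact_mod_cast hδρ ρ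
    have hlt := hle.trans_lt (hδε.trans_le (min_le_left ε 1))
    push_cast at hlt ⊢
    simpa using hlt
  refine ⟨(t : ℕ) + δ * σ, (t : ℕ) + δ * τ, hnear σ, hnear τ,
    not_xorFin_iff_of_forall_ne t (fun s hs => ?_) ?_⟩
  · have hts : (1 : ℚ) ≤ |((t : ℕ) : ℚ) - (s : ℕ)| :=
      one_le_abs_natCast_sub fun h => hs (Fin.ext h).symm
    have hside : ∀ ρ : SignType, SignType.sign ((t : ℕ) + δ * ρ - (s : ℕ) : ℚ) =
        SignType.sign (((t : ℕ) : ℚ) - (s : ℕ)) := fun ρ => by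
      rw [add_sub_right_comm]
      exact sign_add_of_abs_lt (by linarith [hδρ ρ])
    rw [hside, hside]
  · simpa [sign_mul, sign_pos hδ', sign_coe_signType] using h

end Xor

section Indiscernible

variable {M : Type*} [L.Structure M] {β : Type*} {I : Type*} [LinearOrder I] {b : I → β → M}

lemma IsIndiscernible.realize_iff_of_strictMono (hb : IsIndiscernible L b) {κ : Type*}
    [LinearOrder κ] [Fintype κ] (ψ : L.Formula (κ × β)) {i j : κ → I} (hi : StrictMono i)
    (hj : StrictMono j) :
    ψ.Realize (fun v => b (i v.1) v.2) ↔ ψ.Realize (fun v => b (j v.1) v.2) := by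
  let e := Fintype.orderIsoFinOfCardEq κ rfl
  have := hb _ (ψ.relabel fun v => (e.symm v.1, v.2)) (i ∘ e) (j ∘ e)
    (hi.comp e.strictMono) (hj.comp e.strictMono)
  simpa [Formula.realize_relabel, Function.comp_def] using this

lemma IsIndiscernible.blocks (hb : IsIndiscernible L b) {J : Type*} [LinearOrder J] {m : ℕ}
    {H : Fin m → J → I} (hH : ∀ t, StrictMono (H t))
    (hsep : ∀ t t', t < t' → ∀ i j, H t i < H t' j) :
    IsIndiscernible L fun i (v : Fin m × β) => b (H v.1 i) v.2 := by
  have hlex : ∀ {k : ℕ} {i : Fin k → J}, StrictMono i →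
      StrictMono fun u : Lex (Fin m × Fin k) => H (ofLex u).1 (i (ofLex u).2) := by
    intro k i hi u u' huu'
    rcases Prod.Lex.lt_iff.mp huu' with h | ⟨h, h'⟩
    · exact hsep _ _ h _ _
    · simp only [h]
      exact hH _ (hi h')
  intro k ψ i j hi hj
  have := hb.realize_iff_of_strictMono (ψ.relabel fun w => (toLex (w.2.1, w.1), w.2.2))
    (hlex hi) (hlex hj)
  rwa [Formula.realize_relabel, Formula.realize_relabel] at this

end Indiscernible

theorem exists_indiscernible_natCast_mem_cuts {M : Type*} [L.Structure M] {α γ : Type*}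
    {a : α → M} {b : ℚ → γ → M} (hb : IsIndiscernible L b) {m : ℕ} {c : Fin m → ℝ}
    (hc : StrictMono c) (φ : Fin m → L.Formula (α ⊕ γ))
    (hcut : ∀ t, c t ∈ cuts fun i => (φ t).Realize (Sum.elim a (b i)))
    (hfin : ∀ t, ∃ D : Finset ℝ, Captures D fun i => (φ t).Realize (Sum.elim a (b i))) :
    ∃ (b' : ℚ → Fin m × γ → M) (Φ : L.Formula (α ⊕ Fin m × γ)), IsIndiscernible L b' ∧
      ∀ t : Fin m, ((t : ℕ) : ℝ) ∈ cuts fun i => Φ.Realize (Sum.elim a (b' i)) := by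
  set F : Fin m → ℚ → Prop := fun t i => (φ t).Realize (Sum.elim a (b i))
  choose ε hε hgerm using fun t => (hfin t).choose_spec.exists_signDeterminedNear (c t)
  obtain ⟨r, hr, hrε, hrc⟩ := exists_separating_radius_of_strictMono hc ε hε
  replace hgerm := fun t => (hgerm t).mono (hrε t)
  choose ι hι using fun t => exists_isSqueeze (c t) hr
  set H : Fin m → ℚ → ℚ := fun t i => ι t (i - (t : ℕ))
  have hH : ∀ t, StrictMono (H t) := fun t =>
    (hι t).strictMono.comp fun x y h => sub_lt_sub_right h _
  have hsep : ∀ t t', t < t' → ∀ i j, H t i < H t' j := fun t t' htt' i j =>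
    (hι t).lt (hι t') (hrc t t' htt') _ _
  set g : Fin m → SignType → Prop := fun t σ => F t (ι t σ)
  have hg : ∀ t i, F t (H t i) ↔ g t (SignType.sign (i - (t : ℕ))) := fun t i =>
    (hgerm t).comp_isSqueeze_iff (hι t) _
  set Φ : L.Formula (α ⊕ Fin m × γ) :=
    xorFormula fun t => (φ t).relabel (Sum.elim Sum.inl fun v => Sum.inr (t, v))
  have htrace : (fun i => Φ.Realize (Sum.elim a fun v => b (H v.1 i) v.2)) =
      fun i : ℚ => xorFin fun s => g s (SignType.sign (i - (s : ℕ))) := by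
    funext i
    rw [realize_xorFormula]
    congr 1
    funext s
    rw [Formula.realize_relabel, Sum.comp_elim, ← propext (hg s i)]
    rfl
  refine ⟨fun i v => b (H v.1 i) v.2, Φ, hb.blocks hH hsep, fun t => ?_⟩
  obtain ⟨σ, τ, hστ⟩ := (hgerm t).exists_not_iff_of_mem_cuts (hι t) (hcut t)
  rw [htrace]
  exact natCast_mem_cuts_xorFin g hστ

lemma realize_relabel_swap {M : Type*} [L.Structure M] {α β : Type*} (φ : L.Formula (α ⊕ β))
    (u : β → M) (v : α → M) :
    (φ.relabel Sum.swap).Realize (Sum.elim u v) ↔ φ.Realize (Sum.elim v u) := by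
  rw [Formula.realize_relabel, Sum.elim_swap]

theorem card_le_of_subset_iUnion_cuts {M : Type*} [L.Structure M] {α : Type*}
    {p : Set (L.Formula α)} {n : ℕ}
    (hloc : ∀ (β : Type) (φ : L.Formula (α ⊕ β)), LocalDpRankLE M φ p n)
    {a : α → M} (ha : RealizesType p a) {γ : Type} {b : ℚ → γ → M} (hb : IsIndiscernible L b)
    (s : Finset ℝ) (hs : ↑s ⊆ ⋃ φ : L.Formula (α ⊕ γ), cuts fun i => φ.Realize (Sum.elim a (b i))) :
    s.card ≤ n := by
  set c := s.orderEmbOfFin rfl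
  choose φ hφ using fun t => Set.mem_iUnion.mp (hs (s.orderEmbOfFin_mem rfl t))
  obtain ⟨b', Φ, hb', hcuts⟩ := exists_indiscernible_natCast_mem_cuts hb c.strictMono φ hφ
    fun t => ⟨_, (hloc γ (φ t) a ha b hb).choose_spec.2⟩
  obtain ⟨C, hCn, hC⟩ := hloc _ Φ a ha b' hb'
  calc s.card = (Finset.univ : Finset (Fin s.card)).card := by simp
    _ ≤ C.card := Finset.card_le_card_of_injOn (fun t => ((t : ℕ) : ℝ))
        (fun t _ => Captures.cuts_subset hC (hcuts t))
        fun t _ t' _ h => Fin.ext (Nat.cast_injective h)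
    _ ≤ n := hCn

/-- Proposition 2.3: a partial type `p(x)` has dp-rank `≤ n` if and only if every
formula `φ(x;y)` has local dp-rank `≤ n` with respect to `p`. -/
theorem dpRank_le_iff_local_dpRank_le (M : Type*) [L.Structure M] {α : Type*}
    (p : Set (L.Formula α)) (n : ℕ) :
    DpRankLE M p n ↔
      ∀ (β : Type) (φ : L.Formula (α ⊕ β)), LocalDpRankLE M φ p n := by
  constructor
  · intro hD β φ a ha b hb
    obtain ⟨C, hCn, hC⟩ := hD a ha β b hb
    refine ⟨C, hCn, fun i j hij => ?_⟩
    simpa only [realize_relabel_swap] using hC i j hij (φ.relabel Sum.swap)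
  · intro hloc a ha γ b hb
    obtain ⟨C, hCn, hC⟩ :=
      exists_finset_superset_of_forall_card_le (card_le_of_subset_iUnion_cuts hloc ha hb)
    refine ⟨C, hCn, fun i j hij ψ => ?_⟩
    rw [← realize_relabel_swap ψ, ← realize_relabel_swap ψ]
    exact (captures_cuts _).mono ((Set.subset_iUnion _ (ψ.relabel Sum.swap)).trans hC) i j hij

end VCPaper
end

section
/- If there exists k < ω such that every formula φ(x;y) with |x| = 1 has UDTFS-rank ≤ k, then every formula φ(x;y) has UDTFS-rank ≤ k·|x|. (Proposition 4.1, quoted from Guingona–Laskowski and Aschenbrenner–Dolich–Haskell–MacPherson–Starchenko) -/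
open FirstOrder FirstOrder.Language

namespace VCPaper

variable {L : Language}

/-- Proposition 4.1 (Guingona–Laskowski, Aschenbrenner–Dolich–Haskell–MacPherson–
Starchenko): if every formula `φ(x;y)` with `|x| = 1` has UDTFS-rank `≤ k` (with
respect to the trivial type `x = x`), then every formula `φ(x;y)` has
UDTFS-rank `≤ k·|x|`. -/
theorem UDTFS_rank_subadditive (M : Type*) [L.Structure M] (k : ℕ)
    (h : ∀ (β : Type) (φ : L.Formula (Fin 1 ⊕ β)),
      UDTFSRankLE M φ (∅ : Set (L.Formula (Fin 1))) k) :
    ∀ (m : ℕ) (β : Type) (φ : L.Formula (Fin m ⊕ β)),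
      UDTFSRankLE M φ (∅ : Set (L.Formula (Fin m))) (k * m) := by
  intro m
  induction m with
  | zero =>
    intro β φ
    refine ⟨1, fun _ => φ.relabel (Sum.elim (fun i : Fin 0 => i.elim0) Sum.inl), ?_⟩
    intro B hBfin hBne q hq
    obtain ⟨hq0, a, -, hqa⟩ := hq
    refine ⟨0, fun _ => hBne.some, fun _ => hBne.some_mem, ?_⟩
    intro c hc
    rw [Formula.realize_relabel]
    have hval : ((Sum.elim c (fun v : Fin (k * 0) × β => hBne.some v.2)) ∘
        (Sum.elim (fun i : Fin 0 => i.elim0) Sum.inl)) = Sum.elim a c := by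
      funext x
      cases x with
      | inl i => exact i.elim0
      | inr b => rfl
    rw [hval]
    exact (hqa c hc).symm
  | succ m IH =>
    intro β φ
    classical
    -- split off the last variable
    set σ : Fin (m + 1) ⊕ β → Fin 1 ⊕ (Fin m ⊕ β) :=
      Sum.elim (fun i => Fin.lastCases (Sum.inl 0) (fun j => Sum.inr (Sum.inl j)) i)
        (fun b => Sum.inr (Sum.inr b)) with hσ
    obtain ⟨R₁, ψ₁, hψ₁⟩ := h (Fin m ⊕ β) (φ.relabel σ)
    -- absorb the first m variables of the parameters of ψ₁ into the object variables
    set τ : (Fin m ⊕ β) ⊕ (Fin k × (Fin m ⊕ β)) → Fin m ⊕ (β ⊕ Fin k × β) :=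
      Sum.elim (Sum.elim Sum.inl (fun b => Sum.inr (Sum.inl b)))
        (fun v => Sum.elim Sum.inl (fun b => Sum.inr (Sum.inr (v.1, b))) v.2) with hτ
    choose R₂ ψ₂ hψ₂ using fun r₁ : Fin R₁ => IH (β ⊕ Fin k × β) ((ψ₁ r₁).relabel τ)
    set S := Finset.univ.sup R₂ with hS
    -- relabeling to eliminate the duplicated parameters
    set ρ : ((β ⊕ Fin k × β) ⊕ (Fin (k * m) × (β ⊕ Fin k × β))) → β ⊕ (Fin (k * m + k) × β) :=
      Sum.elim (Sum.elim Sum.inl (fun jb => Sum.inr (finSumFinEquiv (Sum.inr jb.1), jb.2)))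
        (fun v => Sum.elim (fun b => Sum.inr (finSumFinEquiv (Sum.inl v.1), b))
          (fun jb => Sum.inr (finSumFinEquiv (Sum.inr jb.1), jb.2)) v.2) with hρ
    refine ⟨R₁ * S, fun r =>
      if hr : ((finProdFinEquiv.symm r).2 : ℕ) < R₂ (finProdFinEquiv.symm r).1
      then ((ψ₂ (finProdFinEquiv.symm r).1 ⟨_, hr⟩).relabel ρ) else ⊥, ?_⟩
    intro B hBfin hBne q hq
    obtain ⟨hq0, a, -, hqa⟩ := hq
    set a' : Fin m → M := fun i => a i.castSucc with ha'
    set a₁ : Fin 1 → M := fun _ => a (Fin.last m) with ha₁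
    set B₁ : Set (Fin m ⊕ β → M) := (fun c : β → M => Sum.elim a' c) '' B with hB₁
    set q₁ : (Fin m ⊕ β → M) → Bool :=
      fun c => decide (c ∈ B₁ ∧ (φ.relabel σ).Realize (Sum.elim a₁ c)) with hq₁def
    have hq₁mem : q₁ ∈ SetPhiTypes M (φ.relabel σ) ∅ B₁ := by
      refine ⟨fun c hc => ?_, a₁, fun ψ hψ => hψ.elim, fun c hc => ?_⟩
      · simp [hq₁def, hc]
      · simp [hq₁def, hc]
    obtain ⟨r₁, f₁, hf₁B, hf₁⟩ := hψ₁ B₁ (hBfin.image _) (hBne.image _) q₁ hq₁mem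
    simp only [hB₁, Set.mem_image] at hf₁B
    choose bb hbbB hbb using hf₁B
    -- key translation for σ
    have key1 : ∀ b : β → M,
        (φ.relabel σ).Realize (Sum.elim a₁ (Sum.elim a' b)) ↔ φ.Realize (Sum.elim a b) := by
      intro b
      rw [Formula.realize_relabel]
      have hval : (Sum.elim a₁ (Sum.elim a' b)) ∘ σ = Sum.elim a b := by
        funext x
        cases x with
        | inl i =>
          induction i using Fin.lastCases with
          | last => simp [hσ, ha₁]
          | cast j => simp [hσ, ha']
        | inr b0 => rfl
      rw [hval]
    -- the φ-type of a is translated by ψ₁ r₁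
    have key2 : ∀ b ∈ B,
        ((ψ₁ r₁).Realize (Sum.elim (Sum.elim a' b) (fun v : Fin k × (Fin m ⊕ β) => f₁ v.1 v.2))
          ↔ q b = true) := by
      intro b hb
      have hmem : Sum.elim a' b ∈ B₁ := ⟨b, hb, rfl⟩
      rw [hf₁ _ hmem, hq₁def]
      simp only [decide_eq_true_iff]
      rw [key1 b]
      constructor
      · rintro ⟨-, hx⟩; exact (hqa b hb).mpr hx
      · intro hx; exact ⟨hmem, (hqa b hb).mp hx⟩
    set bvecfun : Fin k × β → M := fun v => f₁ v.1 (Sum.inr v.2) with hbvec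
    set B' : Set ((β ⊕ Fin k × β) → M) := (fun c : β → M => Sum.elim c bvecfun) '' B with hB'
    set q' : ((β ⊕ Fin k × β) → M) → Bool :=
      fun c' => decide (c' ∈ B' ∧ ((ψ₁ r₁).relabel τ).Realize (Sum.elim a' c')) with hq'def
    have hq'mem : q' ∈ SetPhiTypes M ((ψ₁ r₁).relabel τ) ∅ B' := by
      refine ⟨fun c hc => ?_, a', fun ψ hψ => hψ.elim, fun c hc => ?_⟩
      · simp [hq'def, hc]
      · simp [hq'def, hc]
    obtain ⟨r₂, f₂, hf₂B, hf₂⟩ := hψ₂ r₁ B' (hBfin.image _) (hBne.image _) q' hq'mem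
    simp only [hB', Set.mem_image] at hf₂B
    choose cc hccB hcc using hf₂B
    -- key translation for τ
    have key3 : ∀ b : β → M,
        (Sum.elim a' (Sum.elim b bvecfun)) ∘ τ =
          Sum.elim (Sum.elim a' b) (fun v : Fin k × (Fin m ⊕ β) => f₁ v.1 v.2) := by
      intro b
      funext x
      rcases x with (i | b0) | ⟨j, i | b0⟩
      · rfl
      · rfl
      · show a' i = f₁ j (Sum.inl i)
        rw [← hbb j]
        rfl
      · rfl
    have key4 : ∀ b ∈ B,
        (((ψ₁ r₁).relabel τ).Realize (Sum.elim a' (Sum.elim b bvecfun)) ↔ q b = true) := by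
      intro b hb
      rw [Formula.realize_relabel, key3 b]
      exact key2 b hb
    -- the final parameter sequence
    set f : Fin (k * m + k) → β → M := fun s =>
      Sum.elim (fun t b => f₂ t (Sum.inl b)) (fun j b => f₁ j (Sum.inr b))
        (finSumFinEquiv.symm s) with hf
    have hS' : (r₂ : ℕ) < S := lt_of_lt_of_le r₂.isLt (Finset.le_sup (Finset.mem_univ r₁))
    refine ⟨finProdFinEquiv (r₁, ⟨(r₂ : ℕ), hS'⟩), f, ?_, ?_⟩
    · intro s
      simp only [hf]
      rcases e : finSumFinEquiv.symm s with t | j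
      · simp only [Sum.elim_inl]
        have : (fun b => f₂ t (Sum.inl b)) = cc t := by
          rw [← hcc t]; rfl
        rw [this]; exact hccB t
      · simp only [Sum.elim_inr]
        have : (fun b => f₁ j (Sum.inr b)) = bb j := by
          rw [← hbb j]; rfl
        rw [this]; exact hbbB j
    · intro c hc
      have hrr : finProdFinEquiv.symm (finProdFinEquiv (r₁, (⟨(r₂ : ℕ), hS'⟩ : Fin S)))
          = (r₁, (⟨(r₂ : ℕ), hS'⟩ : Fin S)) := Equiv.symm_apply_apply _ _
      beta_reduce
      rw [hrr]
      dsimp only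
      rw [dif_pos r₂.isLt]
      simp only [Fin.eta]
      rw [Formula.realize_relabel]
      have hval : (Sum.elim c (fun v : Fin (k * (m + 1)) × β => f v.1 v.2)) ∘ ρ =
          Sum.elim (Sum.elim c bvecfun)
            (fun v : Fin (k * m) × ((β ⊕ Fin k × β)) => f₂ v.1 v.2) := by
        funext x
        rcases x with (b0 | ⟨j, b0⟩) | ⟨t, b0 | ⟨j, b0⟩⟩
        · rfl
        · show f (finSumFinEquiv (Sum.inr j)) b0 = bvecfun (j, b0)
          rw [hf]; simp [hbvec]
        · show f (finSumFinEquiv (Sum.inl t)) b0 = f₂ t (Sum.inl b0)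
          rw [hf]; simp
        · show f (finSumFinEquiv (Sum.inr j)) b0 = f₂ t (Sum.inr (j, b0))
          rw [hf, ← hcc t]
          simp [hbvec]
      rw [hval]
      have hmem' : Sum.elim c bvecfun ∈ B' := ⟨c, hc, rfl⟩
      rw [hf₂ _ hmem', hq'def]
      simp only [decide_eq_true_iff]
      constructor
      · rintro ⟨-, hx⟩; exact (key4 c hc).mp hx
      · intro hx; exact ⟨hmem', (key4 c hc).mpr hx⟩

end VCPaper
end
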